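/- arXiv:0908.0181 — 2 statements merged into one kernel-verified Lean document; each statement's English description precedes it below -/
import Mathlib

section
/- Let M be a simple matroid of rank r with 3r-3 elements, all lines having at most 3 elements, real characteristic roots, and χ(M;2) = 0. If M has exactly 3r-5 three-point lines, then χ(M;λ) = (λ-1)(λ-2)(λ-3)^{r-2}. -/
open Finset Polynomial

/-! For a simple matroid whose lines have at most three points, the subsets of rank at most two
are the empty set, the points, the pairs and the three-point lines, so Whitney's expansion shows
that `χ(M;λ)` is monic of degree `r` with `λ^{r-1}`-coefficient `-n` and `λ^{r-2}`-coefficient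
`C(n,2) - γ₃`; moreover `χ(M;1) = 0`. With `n = 3r - 3` and `γ₃ = 3r - 5`, Vieta's formulas give
real roots with sum `3r - 3` and sum of squares `n² - 2(C(n,2) - γ₃) = 9r - 13`. Removing the
roots `1` and `2` leaves `r - 2` real numbers with mean `3` and mean square `9`; their variance
vanishes, so all of them equal `3`. -/

section MatroidDefs

variable {α : Type} [Fintype α] [DecidableEq α]

/-- The rank of a set `X` in a matroid `M`: the largest size of an independent subset
of `X`. -/
noncomputable def mrk (M : Matroid α) (X : Set α) : ℕ :=
  sSup {n | ∃ I, M.Indep I ∧ I ⊆ X ∧ I.ncard = n}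

/-- A matroid is simple if every pair of elements of the ground set is independent
(equivalently, it has no loops and no parallel pairs). -/
def mSimple (M : Matroid α) : Prop :=
  ∀ e f, e ∈ M.E → f ∈ M.E → M.Indep {e, f}

/-- The characteristic polynomial of a matroid on the ground set `α`, via the Whitney
rank expansion `χ(M;λ) = Σ_{A ⊆ E} (-1)^{|A|} λ^{r(E) - r(A)}` (which agrees with the
Möbius-function definition for loopless matroids). -/
noncomputable def charPoly (M : Matroid α) : Polynomial ℤ :=
  ∑ A : Finset α, C ((-1 : ℤ) ^ A.card) * X ^ (mrk M Set.univ - mrk M (A : Set α))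

/-- The number of lines (rank-2 flats) of `M` with exactly `k` points. -/
noncomputable def lineCount (M : Matroid α) (k : ℕ) : ℕ :=
  Nat.card {F : Set α | M.IsFlat F ∧ mrk M F = 2 ∧ F.ncard = k}

/-- Every line (rank-2 flat) of `M` has at most 3 points. -/
def linesAtMost3 (M : Matroid α) : Prop :=
  ∀ F : Set α, M.IsFlat F → mrk M F = 2 → F.ncard ≤ 3

/-- An integer polynomial has only real roots. -/
def onlyRealRoots (p : Polynomial ℤ) : Prop :=
  (p.map (Int.castRingHom ℝ)).Splits

/-- An integer polynomial has only integral roots: every complex root is an integer. -/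
def onlyIntegerRoots (p : Polynomial ℤ) : Prop :=
  ∀ z ∈ (p.map (Int.castRingHom ℂ)).roots, ∃ k : ℤ, z = (k : ℂ)

/-- A matroid is connected if no proper nonempty subset of the ground set gives an
additive separation of the rank. -/
def mConnected (M : Matroid α) : Prop :=
  M.E.Nonempty ∧ ∀ A : Set α, A ⊆ M.E → A.Nonempty → (M.E \ A).Nonempty →
    mrk M A + mrk M (M.E \ A) ≠ mrk M M.E

/-- A flat `X` of `M` is modular if every line `L` with
`rank(X ∨ L) = rank(X) + 1` meets `X`. -/
def modularFlat (M : Matroid α) (Y : Set α) : Prop :=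
  M.IsFlat Y ∧ ∀ L : Set α, M.IsFlat L → mrk M L = 2 →
    mrk M (Y ∪ L) = mrk M Y + 1 → (Y ∩ L).Nonempty

end MatroidDefs

section Rank

variable {α : Type} [Finite α] {M : Matroid α} {X : Set α}

theorem cast_mrk_eq_eRk (M : Matroid α) (X : Set α) : (mrk M X : ℕ∞) = M.eRk X := by
  obtain ⟨I, hI⟩ := M.exists_isBasis' X
  have hgreatest : IsGreatest {n | ∃ I, M.Indep I ∧ I ⊆ X ∧ I.ncard = n} I.ncard := by
    refine ⟨⟨I, hI.indep, hI.subset, rfl⟩, ?_⟩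
    rintro _ ⟨J, hJ, hJX, rfl⟩
    rw [← Nat.cast_le (α := ℕ∞), J.toFinite.cast_ncard_eq, I.toFinite.cast_ncard_eq,
      hI.encard_eq_eRk]
    exact hJ.encard_le_eRk_of_subset hJX
  rw [mrk, hgreatest.csSup_eq, I.toFinite.cast_ncard_eq, hI.encard_eq_eRk]

theorem mrk_mono (M : Matroid α) : Monotone (mrk M) := fun X Y hXY => by
  have := M.eRk_mono hXY
  rwa [← cast_mrk_eq_eRk, ← cast_mrk_eq_eRk, Nat.cast_le] at this

theorem mrk_le_ncard (M : Matroid α) (X : Set α) : mrk M X ≤ X.ncard := by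
  rw [← Nat.cast_le (α := ℕ∞), cast_mrk_eq_eRk, X.toFinite.cast_ncard_eq]
  exact M.eRk_le_encard X

theorem mrk_closure_eq (M : Matroid α) (X : Set α) : mrk M (M.closure X) = mrk M X := by
  rw [← Nat.cast_inj (R := ℕ∞), cast_mrk_eq_eRk, cast_mrk_eq_eRk, M.eRk_closure_eq]

theorem Matroid.Indep.mrk_eq_ncard (hX : M.Indep X) : mrk M X = X.ncard := by
  rw [← Nat.cast_inj (R := ℕ∞), cast_mrk_eq_eRk, X.toFinite.cast_ncard_eq, hX.eRk_eq_encard]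

theorem mSimple.indep_of_ncard_le_two (hs : mSimple M) (hX : X ⊆ M.E) (h2 : X.ncard ≤ 2) :
    M.Indep X := by
  interval_cases h : X.ncard
  · rw [(Set.ncard_eq_zero X.toFinite).1 h]
    exact M.empty_indep
  · obtain ⟨e, rfl⟩ := Set.ncard_eq_one.1 h
    simpa using hs e e (hX rfl) (hX rfl)
  · obtain ⟨e, f, -, rfl⟩ := Set.ncard_eq_two.1 h
    exact hs e f (hX (by simp)) (hX (by simp))

theorem mSimple.min_ncard_two_le_mrk (hs : mSimple M) (hX : X ⊆ M.E) :
    min X.ncard 2 ≤ mrk M X := by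
  obtain ⟨Y, hYX, hY⟩ := Set.exists_subset_card_eq (min_le_left X.ncard 2)
  have hYind : M.Indep Y := hs.indep_of_ncard_le_two (hYX.trans hX) (hY ▸ min_le_right _ _)
  exact hY ▸ hYind.mrk_eq_ncard ▸ mrk_mono M hYX

theorem ncard_closure_le_three (hl : linesAtMost3 M) (h : mrk M X = 2) :
    (M.closure X).ncard ≤ 3 :=
  hl _ (M.isFlat_closure X) (by rwa [mrk_closure_eq])

theorem ncard_le_three_of_mrk_eq_two (hl : linesAtMost3 M) (hX : X ⊆ M.E) (h : mrk M X = 2) :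
    X.ncard ≤ 3 :=
  (Set.ncard_le_ncard (M.subset_closure X hX)).trans (ncard_closure_le_three hl h)

theorem isFlat_of_mrk_eq_two_of_ncard_eq_three (hl : linesAtMost3 M) (hX : X ⊆ M.E)
    (h2 : mrk M X = 2) (h3 : X.ncard = 3) : M.IsFlat X := by
  have hcl : X = M.closure X := Set.eq_of_subset_of_ncard_le (M.subset_closure X hX)
    (h3 ▸ ncard_closure_le_three hl h2)
  exact hcl ▸ M.isFlat_closure X

end Rank

section CharPoly

variable {α : Type} [Fintype α] {M : Matroid α}

theorem coeff_charPoly (M : Matroid α) (j : ℕ) :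
    (charPoly M).coeff j =
      ∑ A ∈ univ.filter fun A : Finset α => mrk M Set.univ - mrk M A = j,
        (-1 : ℤ) ^ #A := by
  simp only [charPoly, finsetSum_coeff, coeff_C_mul, coeff_X_pow]
  rw [Finset.sum_filter]
  refine Finset.sum_congr rfl fun A _ => ?_
  split_ifs <;> simp_all [eq_comm]

theorem coeff_charPoly_eq_zero_of_rank_lt {j : ℕ} (hj : mrk M Set.univ < j) :
    (charPoly M).coeff j = 0 := by
  rw [coeff_charPoly]
  exact Finset.sum_eq_zero fun A hA => absurd (Finset.mem_filter.1 hA).2 (by omega)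

theorem coeff_charPoly_rank_sub {k : ℕ} (hk : k ≤ mrk M Set.univ) :
    (charPoly M).coeff (mrk M Set.univ - k) =
      ∑ A ∈ univ.filter fun A : Finset α => mrk M A = k, (-1 : ℤ) ^ #A := by
  rw [coeff_charPoly]
  refine Finset.sum_congr (Finset.filter_congr fun A _ => ?_) fun _ _ => rfl
  have := mrk_mono M (Set.subset_univ (A : Set α))
  omega

theorem charPoly_eval_one [Nonempty α] (M : Matroid α) : (charPoly M).eval 1 = 0 := by
  classical
  simp only [charPoly, eval_finsetSum, eval_mul, eval_C, eval_pow, eval_X, one_pow, mul_one]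
  rw [← Finset.powerset_univ]
  exact Finset.sum_powerset_neg_one_pow_card_of_nonempty Finset.univ_nonempty

variable (hE : M.E = Set.univ)
include hE

theorem lineCount_three_eq_card (hl : linesAtMost3 M) :
    lineCount M 3 = #(univ.filter fun A : Finset α => mrk M A = 2 ∧ #A = 3) := by
  have hline : ∀ A : Finset α, mrk M A = 2 ∧ #A = 3 ↔
      Fintype.finsetEquivSet A ∈ {F : Set α | M.IsFlat F ∧ mrk M F = 2 ∧ F.ncard = 3} := by
    intro A
    simp only [Fintype.finsetEquivSet_apply, Set.mem_ofPred_eq, Set.ncard_coe_finset]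
    refine ⟨fun ⟨h2, h3⟩ => ⟨?_, h2, h3⟩, fun ⟨_, h2, h3⟩ => ⟨h2, h3⟩⟩
    exact isFlat_of_mrk_eq_two_of_ncard_eq_three hl (hE ▸ Set.subset_univ _) h2
      (by rwa [Set.ncard_coe_finset])
  rw [lineCount, ← Nat.card_congr (Fintype.finsetEquivSet.subtypeEquiv hline),
    Nat.card_eq_fintype_card, Fintype.card_subtype]

variable (hs : mSimple M)
include hs

theorem min_card_two_le_mrk (A : Finset α) : min #A 2 ≤ mrk M A := by
  simpa using hs.min_ncard_two_le_mrk (X := A) (hE ▸ Set.subset_univ _)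

theorem coeff_charPoly_rank : (charPoly M).coeff (mrk M Set.univ) = 1 := by
  classical
  have hzero : ∀ A : Finset α, mrk M A = 0 ↔ A = ∅ := fun A => by
    have := min_card_two_le_mrk hE hs A
    have := mrk_le_ncard M A
    rw [Set.ncard_coe_finset, ← Finset.card_eq_zero] at *
    omega
  have h := coeff_charPoly_rank_sub (M := M) (Nat.zero_le _)
  rw [Nat.sub_zero] at h
  rw [h, Finset.filter_congr fun A _ => hzero A, Finset.filter_eq' univ ∅]
  simp

theorem natDegree_charPoly : (charPoly M).natDegree = mrk M Set.univ :=
  natDegree_eq_of_le_of_coeff_ne_zero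
    (natDegree_le_iff_coeff_eq_zero.2 fun _ hj => coeff_charPoly_eq_zero_of_rank_lt hj)
    (by rw [coeff_charPoly_rank hE hs]; exact one_ne_zero)

theorem monic_charPoly : (charPoly M).Monic := by
  rw [Monic, leadingCoeff, natDegree_charPoly hE hs, coeff_charPoly_rank hE hs]

theorem coeff_charPoly_rank_sub_one (hr : 1 ≤ mrk M Set.univ) :
    (charPoly M).coeff (mrk M Set.univ - 1) = -Fintype.card α := by
  classical
  have hone : univ.filter (fun A : Finset α => mrk M A = 1) = powersetCard 1 univ := by
    ext A
    have := min_card_two_le_mrk hE hs A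
    have := mrk_le_ncard M A
    rw [Set.ncard_coe_finset] at *
    simp only [mem_filter, mem_univ, true_and, mem_powersetCard_univ]
    omega
  rw [coeff_charPoly_rank_sub hr, hone, sum_powersetCard, card_univ]
  simp

theorem coeff_charPoly_rank_sub_two (hl : linesAtMost3 M) (hr : 2 ≤ mrk M Set.univ) :
    (charPoly M).coeff (mrk M Set.univ - 2) = (Fintype.card α).choose 2 - lineCount M 3 := by
  classical
  set lines := univ.filter fun A : Finset α => mrk M A = 2 ∧ #A = 3
  have hsplit : univ.filter (fun A : Finset α => mrk M A = 2) = powersetCard 2 univ ∪ lines := by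
    ext A
    have := min_card_two_le_mrk hE hs A
    have := mrk_le_ncard M A
    have h3 : mrk M A = 2 → (A : Set α).ncard ≤ 3 :=
      ncard_le_three_of_mrk_eq_two hl (hE ▸ Set.subset_univ _)
    rw [Set.ncard_coe_finset] at *
    simp only [lines, mem_union, mem_filter, mem_univ, true_and, mem_powersetCard_univ]
    omega
  have hdisj : Disjoint (powersetCard 2 univ) lines := by
    refine disjoint_left.2 fun A h2 h3 => ?_
    simp only [lines, mem_filter, mem_powersetCard_univ] at h2 h3
    omega
  have hlines : ∑ A ∈ lines, (-1 : ℤ) ^ #A = -#lines := by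
    rw [sum_congr rfl fun A hA => by rw [(mem_filter.1 hA).2.2], sum_const]
    simp
  rw [coeff_charPoly_rank_sub hr, hsplit, sum_union hdisj, sum_powersetCard, card_univ, hlines,
    lineCount_three_eq_card hE hl]
  simp [sub_eq_add_neg, lines]

end CharPoly

namespace Multiset

section Esymm

variable {R : Type*} [CommSemiring R]

theorem esymm_one (s : Multiset R) : s.esymm 1 = s.sum := by
  simp [esymm, powersetCard_one]

theorem esymm_cons_succ (a : R) (s : Multiset R) (k : ℕ) :
    (a ::ₘ s).esymm (k + 1) = s.esymm (k + 1) + a * s.esymm k := by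
  simp only [esymm, powersetCard_cons, map_add, sum_add, map_map, Function.comp_def, prod_cons,
    sum_map_mul_left]

theorem sq_sum_eq_sum_map_sq_add_two_mul_esymm_two (s : Multiset R) :
    s.sum ^ 2 = (s.map (· ^ 2)).sum + 2 * s.esymm 2 := by
  induction s using Multiset.induction_on with
  | empty => simp [esymm, powersetCard_zero_right]
  | cons a s ih =>
    rw [sum_cons, map_cons, sum_cons, esymm_cons_succ, esymm_one, add_sq, ih]
    ring

end Esymm

theorem eq_replicate_of_sum_map_sq {K : Type*} [Field K] [LinearOrder K] [IsStrictOrderedRing K]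
    {s : Multiset K} {c : K} (hsum : s.sum = card s * c)
    (hsq : (s.map (· ^ 2)).sum = card s * c ^ 2) : s = replicate (card s) c := by
  have hdev : (s.map fun x => (x - c) ^ 2).sum = 0 := by
    simp only [sub_sq, mul_assoc, sum_map_add, sum_map_sub, sum_map_mul_left, sum_map_mul_right,
      map_const', sum_replicate, nsmul_eq_mul, map_id']
    rw [hsum, hsq]
    ring
  refine eq_replicate_card.2 fun x hx => ?_
  have hle := single_le_sum (s := s.map fun x => (x - c) ^ 2) (by simp [sq_nonneg])
    _ (mem_map_of_mem _ hx)
  nlinarith [sq_nonneg (x - c)]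

end Multiset

namespace Polynomial

theorem sum_map_sq_roots_of_monic_of_splits {F : Type*} [Field F] {p : F[X]} {m : ℕ}
    (hp : p.Monic) (hsplit : p.Splits) (hdeg : p.natDegree = m + 2) :
    (p.roots.map (· ^ 2)).sum = p.coeff (m + 1) ^ 2 - 2 * p.coeff m := by
  have hc1 := coeff_eq_esymm_roots_of_splits hsplit (k := m + 1) (by omega)
  have hc2 := coeff_eq_esymm_roots_of_splits hsplit (k := m) (by omega)
  rw [hp.leadingCoeff, hdeg, show m + 2 - (m + 1) = 1 by omega, Multiset.esymm_one] at hc1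
  rw [hp.leadingCoeff, hdeg, show m + 2 - m = 2 by omega] at hc2
  rw [hc1, hc2]
  linear_combination -p.roots.sq_sum_eq_sum_map_sq_add_two_mul_esymm_two

theorem eq_of_isRoot_one_two_of_sum_roots {q : ℝ[X]} {m : ℕ} (hq : q.Monic) (hsplit : q.Splits)
    (hdeg : q.natDegree = m + 2) (h1 : q.IsRoot 1) (h2 : q.IsRoot 2)
    (hsum : q.roots.sum = 3 * (m : ℝ) + 3) (hsq : (q.roots.map (· ^ 2)).sum = 9 * (m : ℝ) + 5) :
    q = (X - C 1) * (X - C 2) * (X - C 3) ^ m := by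
  obtain ⟨s, hs⟩ : ∃ s, q.roots = 1 ::ₘ 2 ::ₘ s := by
    have h1' : 1 ∈ q.roots := (mem_roots hq.ne_zero).2 h1
    have h2' : 2 ∈ q.roots.erase 1 :=
      (Multiset.mem_erase_of_ne (by norm_num)).2 ((mem_roots hq.ne_zero).2 h2)
    exact ⟨_, by rw [Multiset.cons_erase h2', Multiset.cons_erase h1']⟩
  have hcard : Multiset.card s = m := by
    have := hsplit.natDegree_eq_card_roots
    rw [hdeg, hs] at this
    simpa using this.symm
  rw [hs] at hsum hsq
  simp only [Multiset.sum_cons, Multiset.map_cons] at hsum hsq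
  have hrep : s = Multiset.replicate m 3 := hcard ▸ Multiset.eq_replicate_of_sum_map_sq
    (by rw [hcard]; linarith) (by rw [hcard]; linarith)
  rw [hsplit.eq_prod_roots_of_monic hq, hs, hrep]
  simp [mul_assoc]

theorem eq_of_coeff_of_eval_one_two {p : ℤ[X]} {m n γ : ℕ} (hp : p.Monic)
    (hsplit : (p.map (Int.castRingHom ℝ)).Splits) (hdeg : p.natDegree = m + 2)
    (h1 : p.eval 1 = 0) (h2 : p.eval 2 = 0)
    (hc1 : p.coeff (m + 1) = -n) (hc2 : p.coeff m = n.choose 2 - γ)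
    (hn : n = 3 * m + 3) (hγ : γ = 3 * m + 1) :
    p = (X - C 1) * (X - C 2) * (X - C 3) ^ m := by
  subst hn hγ
  set q := p.map (Int.castRingHom ℝ)
  have hq : q.Monic := hp.map _
  have hqdeg : q.natDegree = m + 2 := by rw [hp.natDegree_map, hdeg]
  have hsum : q.roots.sum = 3 * (m : ℝ) + 3 := by
    have := hsplit.nextCoeff_eq_neg_sum_roots_of_monic hq
    rw [nextCoeff_of_natDegree_pos (by omega), hqdeg, coeff_map, show m + 2 - 1 = m + 1 by omega,
      hc1] at this
    simp only [eq_intCast] at this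
    push_cast at this
    linarith
  have hsq : (q.roots.map (· ^ 2)).sum = 9 * (m : ℝ) + 5 := by
    rw [sum_map_sq_roots_of_monic_of_splits hq hsplit hqdeg, coeff_map, coeff_map, hc1, hc2]
    simp only [eq_intCast]
    push_cast [Nat.cast_choose_two]
    ring
  have hroot (k : ℤ) (hk : p.eval k = 0) : q.IsRoot k := by
    simp [q, IsRoot, eval_intCast_map, hk]
  refine map_injective (Int.castRingHom ℝ) Int.cast_injective ?_
  change q = _
  rw [eq_of_isRoot_one_two_of_sum_roots hq hsplit hqdeg (by simpa using hroot 1 h1)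
    (by simpa using hroot 2 h2) hsum hsq]
  simp [map_ofNat C]

end Polynomial

theorem stmt11_general {α : Type} [Fintype α] (M : Matroid α)
    (hE : M.E = Set.univ) (hsimple : mSimple M)
    (r : ℕ) (hr : mrk M Set.univ = r)
    (hcard : Fintype.card α + 3 = 3 * r)
    (hlines : linesAtMost3 M)
    (hreal : onlyRealRoots (charPoly M))
    (h2 : (charPoly M).eval 2 = 0)
    (hγ : lineCount M 3 + 5 = 3 * r) :
    charPoly M = (X - C 1) * (X - C 2) * (X - C 3) ^ (r - 2) := by
  have hrank : r ≤ Fintype.card α := by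
    simpa [hr] using mrk_le_ncard M Set.univ
  obtain ⟨m, rfl⟩ : ∃ m, r = m + 2 := ⟨r - 2, by omega⟩
  have : Nonempty α := Fintype.card_pos_iff.1 (by omega)
  rw [Nat.add_sub_cancel]
  refine eq_of_coeff_of_eval_one_two (monic_charPoly hE hsimple) hreal
    (by rw [natDegree_charPoly hE hsimple, hr]) (charPoly_eval_one M) h2 ?_ ?_
    (by omega : Fintype.card α = 3 * m + 3) (by omega : lineCount M 3 = 3 * m + 1)
  · simpa [hr] using coeff_charPoly_rank_sub_one hE hsimple (by omega)
  · simpa [hr] using coeff_charPoly_rank_sub_two hE hsimple hlines (by omega)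

/-- Let `M` be a simple matroid of rank `r` with `3r - 3` elements,
all lines having at most 3 elements, real characteristic roots, and `χ(M;2) = 0`.
If `M` has exactly `3r - 5` three-point lines, then
`χ(M;λ) = (λ-1)(λ-2)(λ-3)^{r-2}`. -/
theorem stmt11 {α : Type} [Fintype α] [DecidableEq α] (M : Matroid α)
    (hE : M.E = Set.univ) (hsimple : mSimple M)
    (r : ℕ) (hr : mrk M Set.univ = r)
    (hcard : Fintype.card α + 3 = 3 * r)
    (hlines : linesAtMost3 M)
    (hreal : onlyRealRoots (charPoly M))
    (h2 : (charPoly M).eval 2 = 0)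
    (hγ : lineCount M 3 + 5 = 3 * r) :
    charPoly M = (X - C 1) * (X - C 2) * (X - C 3) ^ (r - 2) :=
  stmt11_general M hE hsimple r hr hcard hlines hreal h2 hγ
end

section
/- Let X be a modular copoint (modular flat of rank r-1) of a simple binary matroid M of rank r, with complement D = E(M) \ X. If rank(D) = d, then M contains a submatroid isomorphic to M(K_{d+1}), the cycle matroid of the complete graph on d+1 vertices. -/
open Finset Polynomial

/-- The GF(2)-incidence vector of the edge `p = (i, j)` of the complete graph on `k`
vertices: the vector `e_i + e_j` in `(Fin k → ZMod 2)`.  A set of edges of `K_k` is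
independent in the cycle matroid `M(K_k)` precisely when the corresponding vectors are
linearly independent over GF(2). -/
def edgeVec (k : ℕ) (p : Fin k × Fin k) : Fin k → ZMod 2 :=
  fun i => (if i = p.1 then 1 else 0) + (if i = p.2 then 1 else 0)

/-! Let `a₁, …, a_d` be a basis of `D`. For `i ≠ j` the line `L` spanned by `aᵢ, aⱼ` satisfies
`r(X ∪ L) = r(X) + 1` because `X` is a copoint, so by modularity `L` meets `X` in a point `b`;
as `M` is simple and binary, `b` is represented by `φ aᵢ + φ aⱼ`. Thus every vector `wᵢ + wⱼ` is
represented in `M`, where `w = (0, φ a₁, …, φ a_d)` is affinely independent. Over GF(2) the map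
`eᵢ ↦ wᵢ` sends the edge vector `eᵢ + eⱼ` of `K_{d+1}` to `wᵢ + wⱼ`, and affine independence of
`w` says exactly that it is injective on the sum-zero hyperplane, which contains all edge
vectors; so it preserves linear (in)dependence of sets of edges. -/

section Rank

variable {α : Type} {M : Matroid α} [M.RankFinite]

lemma natCast_mrk (X : Set α) : (mrk M X : ℕ∞) = M.eRk X := by
  have hX : M.eRk X ≠ ⊤ := M.eRk_ne_top_iff.2 (M.isRkFinite_set X)
  have hS : {n | ∃ I, M.Indep I ∧ I ⊆ X ∧ I.ncard = n} = Set.Iic (M.eRk X).toNat := by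
    ext n
    rw [Set.mem_ofPred_eq, Set.mem_Iic, ← ENat.natCast_le_natCast, ENat.natCast_toNat hX,
      Matroid.le_eRk_iff]
    constructor
    · rintro ⟨I, hI, hIX, rfl⟩
      exact ⟨I, hIX, hI, hI.finite.cast_ncard_eq.symm⟩
    · rintro ⟨I, hIX, hI, hIn⟩
      exact ⟨I, hI, hIX, by rw [← hI.finite.cast_ncard_eq] at hIn; exact_mod_cast hIn⟩
  rw [mrk, hS, csSup_Iic, ENat.natCast_toNat hX]

lemma mrk_eq_ncard {I X : Set α} (hI : M.IsBasis' I X) : mrk M X = I.ncard := by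
  rw [← Nat.cast_inj (R := ℕ∞), natCast_mrk, hI.eRk_eq_encard, hI.indep.finite.cast_ncard_eq]

end Rank

section ModularCopoint

variable {α : Type} {M : Matroid α} [M.RankFinite] {Y : Set α} {e f : α}

lemma modularFlat.inter_closure_pair_nonempty (hY : modularFlat M Y)
    (hcopoint : mrk M Y + 1 = mrk M M.E) (he : e ∈ M.E \ Y) (hef : M.Indep {e, f})
    (hne : e ≠ f) : (Y ∩ M.closure {e, f}).Nonempty := by
  have hYE : Y ⊆ M.E := hY.1.subset_ground
  have hline : mrk M (M.closure {e, f}) = 2 := by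
    rw [mrk_eq_ncard hef.isBasis_closure.isBasis', Set.ncard_pair hne]
  have hcopoint' : M.eRk Y + 1 = M.eRk M.E := by
    rw [← natCast_mrk, ← natCast_mrk]
    exact_mod_cast hcopoint
  have he_closure : e ∈ M.E \ M.closure Y := by rwa [hY.1.closure]
  refine hY.2 _ (M.isFlat_closure _) hline (Nat.cast_injective (R := ℕ∞) ?_)
  push_cast [natCast_mrk]
  refine le_antisymm ?_ ?_
  · exact hcopoint' ▸ M.eRk_mono (Set.union_subset hYE (M.closure_subset_ground _))
  · rw [← Matroid.eRk_insert_eq_add_one he_closure]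
    refine M.eRk_mono (Set.insert_subset (Or.inr ?_) Set.subset_union_left)
    exact M.subset_closure _ (Set.pair_subset he.1 (hef.subset_ground (by simp))) (by simp)

end ModularCopoint

def IsRepresentation {α W : Type*} (K : Type*) [DivisionRing K] [AddCommGroup W] [Module K W]
    (M : Matroid α) (φ : α → W) : Prop :=
  ∀ I ⊆ M.E, M.Indep I ↔ LinearIndepOn K φ I

section Representation

variable {α : Type} {K W : Type*} [DivisionRing K] [AddCommGroup W] [Module K W]
variable {M : Matroid α} {φ : α → W} {I : Set α} {e f b : α}

namespace IsRepresentation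

lemma injOn_ground (hφ : IsRepresentation K M φ) (hsimple : mSimple M) : Set.InjOn φ M.E :=
  fun e he f hf hef => ((hφ _ (Set.pair_subset he hf)).1 (hsimple e f he hf)).injOn
    (by simp) (by simp) hef

lemma ne_zero (hφ : IsRepresentation K M φ) (hsimple : mSimple M) (he : e ∈ M.E) : φ e ≠ 0 := by
  have hind : M.Indep {e} := by simpa using hsimple e e he he
  exact ((hφ _ (Set.singleton_subset_iff.2 he)).1 hind).ne_zero rfl

lemma mem_span_of_mem_closure (hφ : IsRepresentation K M φ) (hI : M.Indep I)
    (he : e ∈ M.closure I) : φ e ∈ Submodule.span K (φ '' I) := by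
  by_contra hspan
  rcases (hI.mem_closure_iff).1 he with hdep | heI
  · apply hdep.not_indep
    rw [hφ _ hdep.subset_ground, linearIndepOn_insert_iff]
    exact ⟨(hφ _ hI.subset_ground).1 hI, fun h => absurd h hspan⟩
  · exact hspan (Submodule.subset_span (Set.mem_image_of_mem φ heI))

end IsRepresentation

end Representation

section Binary

variable {α : Type} {W : Type*} [AddCommGroup W] [Module (ZMod 2) W] {M : Matroid α}
  {φ : α → W} {e f b : α}

lemma IsRepresentation.eq_add_of_mem_closure_pair
    (hφ : IsRepresentation (ZMod 2) M φ) (hsimple : mSimple M) (hef : M.Indep {e, f})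
    (hb : b ∈ M.closure {e, f}) (hbe : b ≠ e) (hbf : b ≠ f) : φ b = φ e + φ f := by
  have hbE : b ∈ M.E := M.closure_subset_ground _ hb
  have heE : e ∈ M.E := hef.subset_ground (by simp)
  have hfE : f ∈ M.E := hef.subset_ground (by simp)
  have hspan := hφ.mem_span_of_mem_closure hef hb
  rw [Set.image_pair, Submodule.mem_span_pair] at hspan
  obtain ⟨c₁, c₂, hc⟩ := hspan
  have hZ2 : ∀ c : ZMod 2, c = 0 ∨ c = 1 := by decide
  rcases hZ2 c₁ with rfl | rfl <;> rcases hZ2 c₂ with rfl | rfl <;>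
    simp only [zero_smul, one_smul, add_zero, zero_add] at hc
  · exact absurd hc.symm (hφ.ne_zero hsimple hbE)
  · exact absurd (hφ.injOn_ground hsimple hbE hfE hc.symm) hbf
  · exact absurd (hφ.injOn_ground hsimple hbE heE hc.symm) hbe
  · exact hc.symm

lemma modularFlat.exists_eq_add [M.RankFinite] {Y : Set α} (hY : modularFlat M Y)
    (hcopoint : mrk M Y + 1 = mrk M M.E) (hφ : IsRepresentation (ZMod 2) M φ)
    (hsimple : mSimple M) (he : e ∈ M.E \ Y) (hf : f ∈ M.E \ Y) (hne : e ≠ f) :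
    ∃ b ∈ Y, φ b = φ e + φ f := by
  have hef : M.Indep {e, f} := hsimple e f he.1 hf.1
  obtain ⟨b, hbY, hb⟩ := hY.inter_closure_pair_nonempty hcopoint he hef hne
  refine ⟨b, hbY, hφ.eq_add_of_mem_closure_pair hsimple hef hb ?_ ?_⟩
  · rintro rfl; exact he.2 hbY
  · rintro rfl; exact hf.2 hbY

end Binary

section CompleteGraph

lemma edgeVec_apply_eq_one_iff {k : ℕ} {p : Fin k × Fin k} (hp : p.1 ≠ p.2) (x : Fin k) :
    edgeVec k p x = 1 ↔ x = p.1 ∨ x = p.2 := by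
  unfold edgeVec
  by_cases h₁ : x = p.1 <;> by_cases h₂ : x = p.2
  · exact absurd (h₁ ▸ h₂) hp
  all_goals simp [h₁, h₂, hp, hp.symm]

lemma edgeVec_injective (k : ℕ) :
    Function.Injective (fun p : {p : Fin k × Fin k // p.1 < p.2} => edgeVec k p.1) := by
  rintro ⟨⟨i, j⟩, hij⟩ ⟨⟨i', j'⟩, hij'⟩ h
  have hends : ∀ x, x = i ∨ x = j ↔ x = i' ∨ x = j' := fun x => by
    rw [← edgeVec_apply_eq_one_iff hij.ne, ← edgeVec_apply_eq_one_iff hij'.ne]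
    exact Iff.of_eq (congrArg (· = 1) (congrFun h x))
  have hi := (hends i).1 (Or.inl rfl)
  have hj := (hends j).1 (Or.inr rfl)
  have hi' := (hends i').2 (Or.inl rfl)
  simp only [Fin.ext_iff, Fin.lt_def] at hi hj hi' hij hij' ⊢
  simp only [Subtype.mk.injEq, Prod.mk.injEq, Fin.ext_iff]
  omega

variable {W : Type*} [AddCommGroup W] [Module (ZMod 2) W]

lemma linearCombination_edgeVec {k : ℕ} (w : Fin k → W) (p : Fin k × Fin k) :
    Fintype.linearCombination (ZMod 2) w (edgeVec k p) = w p.1 + w p.2 := by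
  simp [Fintype.linearCombination_apply, edgeVec, add_smul, ite_smul, Finset.sum_add_distrib]

lemma edgeVec_mem_ker_sum {k : ℕ} (p : Fin k × Fin k) :
    edgeVec k p ∈
      LinearMap.ker (Fintype.linearCombination (ZMod 2) fun _ : Fin k => (1 : ZMod 2)) := by
  rw [LinearMap.mem_ker, linearCombination_edgeVec]
  decide

end CompleteGraph

section AffineIndependent

variable {K W ι : Type*} [Field K] [AddCommGroup W] [Module K W]

lemma affineIndependent_cons_zero {n : ℕ} {v : Fin n → W} (hv : LinearIndependent K v) :
    AffineIndependent K (Fin.cons 0 v : Fin (n + 1) → W) := by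
  rw [affineIndependent_iff_linearIndependent_vsub K _ 0]
  have hdiff : (fun i : {x : Fin (n + 1) // x ≠ 0} => (Fin.cons 0 v : Fin (n + 1) → W) i -ᵥ
      (Fin.cons 0 v : Fin (n + 1) → W) 0) = v ∘ fun i => i.1.pred i.2 := by
    ext ⟨i, hi⟩
    obtain ⟨j, rfl⟩ := Fin.exists_succ_eq.2 hi
    simp
  rw [hdiff]
  exact hv.comp _ fun i j h => Subtype.ext (Fin.pred_inj.1 h)

lemma AffineIndependent.disjoint_ker [Fintype ι] {w : ι → W} (hw : AffineIndependent K w) :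
    Disjoint (LinearMap.ker (Fintype.linearCombination K (fun _ : ι => (1 : K))))
      (LinearMap.ker (Fintype.linearCombination K w)) := by
  rw [Submodule.disjoint_def]
  intro c hsum hcomb
  simp only [LinearMap.mem_ker, Fintype.linearCombination_apply, smul_eq_mul, mul_one] at hsum hcomb
  funext i
  exact hw.eq_zero_of_sum_eq_zero hsum hcomb i (Finset.mem_univ i)

end AffineIndependent

section CycleMatroid

variable {W : Type*} [AddCommGroup W] [Module (ZMod 2) W] {k : ℕ} {w : Fin k → W}

namespace AffineIndependent

lemma linearIndependent_add_iff (hw : AffineIndependent (ZMod 2) w) {ι : Type*}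
    (e : ι → Fin k × Fin k) :
    LinearIndependent (ZMod 2) (fun i => w (e i).1 + w (e i).2) ↔
      LinearIndependent (ZMod 2) (fun i => edgeVec k (e i)) := by
  have hcomb : (fun i => w (e i).1 + w (e i).2) =
      Fintype.linearCombination (ZMod 2) w ∘ fun i => edgeVec k (e i) :=
    funext fun i => (linearCombination_edgeVec w (e i)).symm
  have hspan : Submodule.span (ZMod 2) (Set.range fun i => edgeVec k (e i)) ≤
      LinearMap.ker (Fintype.linearCombination (ZMod 2) (fun _ : Fin k => (1 : ZMod 2))) := by
    rw [Submodule.span_le]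
    rintro _ ⟨i, rfl⟩
    exact edgeVec_mem_ker_sum (e i)
  rw [hcomb]
  exact ⟨LinearIndependent.of_comp _, fun h => h.map (hw.disjoint_ker.mono_left hspan)⟩

lemma injective_of_apply_eq_add (hw : AffineIndependent (ZMod 2) w) {α : Type*} {φ : α → W}
    {g : {p : Fin k × Fin k // p.1 < p.2} → α} (hg : ∀ p, φ (g p) = w p.1.1 + w p.1.2) :
    Function.Injective g := by
  intro p q hpq
  replace hpq := congrArg φ hpq
  rw [hg, hg] at hpq
  apply edgeVec_injective k
  rw [← sub_eq_zero]
  refine Submodule.disjoint_def.1 hw.disjoint_ker _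
    (Submodule.sub_mem _ (edgeVec_mem_ker_sum _) (edgeVec_mem_ker_sum _)) ?_
  rwa [LinearMap.mem_ker, map_sub, linearCombination_edgeVec, linearCombination_edgeVec,
    sub_eq_zero]

end AffineIndependent

lemma IsRepresentation.indep_image_iff {α : Type} {M : Matroid α} {φ : α → W}
    (hφ : IsRepresentation (ZMod 2) M φ) (hw : AffineIndependent (ZMod 2) w)
    {g : {p : Fin k × Fin k // p.1 < p.2} → α} (hgE : ∀ p, g p ∈ M.E)
    (hg : ∀ p, φ (g p) = w p.1.1 + w p.1.2) (S : Set {p : Fin k × Fin k // p.1 < p.2}) :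
    M.Indep (g '' S) ↔ LinearIndependent (ZMod 2) (fun s : S => edgeVec k s.1.1) := by
  have hφg : φ ∘ g = fun p => w p.1.1 + w p.1.2 := funext hg
  rw [hφ _ (Set.image_subset_iff.2 fun p _ => hgE p),
    ← hw.linearIndependent_add_iff fun s : S => s.1.1]
  change _ ↔ LinearIndepOn (ZMod 2) (fun p => w p.1.1 + w p.1.2) S
  rw [← hφg]
  exact ⟨fun h => h.comp_of_image (hw.injective_of_apply_eq_add hg).injOn,
    fun h => h.image_of_comp _ _⟩

end CycleMatroid

theorem stmt17_general {α : Type} [Fintype α] (M : Matroid α)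
    (hsimple : mSimple M)
    (hbinary : ∃ (n : ℕ) (φ : α → (Fin n → ZMod 2)), ∀ I : Set α, I ⊆ M.E →
      (M.Indep I ↔ LinearIndependent (ZMod 2) (fun x : I => φ x)))
    (Y : Set α) (hmod : modularFlat M Y) (hcopoint : mrk M Y + 1 = mrk M M.E)
    (d : ℕ) (hd : mrk M (M.E \ Y) = d) :
    ∃ f : {p : Fin (d + 1) × Fin (d + 1) // p.1 < p.2} → α,
      Function.Injective f ∧ (∀ e, f e ∈ M.E) ∧
      ∀ S : Set {p : Fin (d + 1) × Fin (d + 1) // p.1 < p.2},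
        (M.Indep (f '' S) ↔
          LinearIndependent (ZMod 2) (fun s : S => edgeVec (d + 1) s.1.1)) := by
  obtain ⟨n, φ, hφ⟩ := hbinary
  replace hφ : IsRepresentation (ZMod 2) M φ := hφ
  obtain ⟨J, hJ⟩ := M.exists_isBasis' (M.E \ Y)
  have hJd : Nat.card J = d := by rw [Nat.card_coe_set_eq, ← hd, mrk_eq_ncard hJ]
  set a : Fin d ≃ J := (Finite.equivFinOfCardEq hJd).symm
  have ha : LinearIndependent (ZMod 2) (φ ∘ Subtype.val ∘ a) :=
    ((hφ J (hJ.subset.trans Set.sdiff_subset)).1 hJ.indep).comp a a.injective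
  set w : Fin (d + 1) → Fin n → ZMod 2 := Fin.cons 0 (φ ∘ Subtype.val ∘ a)
  have hw : AffineIndependent (ZMod 2) w := affineIndependent_cons_zero ha
  have hedges : ∀ p : {p : Fin (d + 1) × Fin (d + 1) // p.1 < p.2},
      ∃ x ∈ M.E, φ x = w p.1.1 + w p.1.2 := by
    rintro ⟨⟨i, j⟩, hij⟩
    obtain ⟨j, rfl⟩ := Fin.exists_succ_eq.2 (Fin.ne_zero_of_lt hij)
    cases i using Fin.cases with
    | zero => exact ⟨a j, (hJ.subset (a j).2).1, by simp [w]⟩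
    | succ i =>
      have hne : (a i : α) ≠ a j := fun h =>
        (Fin.succ_lt_succ_iff.1 hij).ne (a.injective (Subtype.ext h))
      obtain ⟨b, hbY, hb⟩ := hmod.exists_eq_add hcopoint hφ hsimple (hJ.subset (a i).2)
        (hJ.subset (a j).2) hne
      exact ⟨b, hmod.1.subset_ground hbY, by simpa [w] using hb⟩
  choose g hgE hg using hedges
  exact ⟨g, hw.injective_of_apply_eq_add hg, hgE, hφ.indep_image_iff hw hgE hg⟩

/-- Let `X` be a modular copoint (modular flat of rank `r - 1`) of a
simple binary matroid `M` of rank `r`, with complement `D = E(M) \ X`.  If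
`rank(D) = d`, then `M` contains a submatroid isomorphic to `M(K_{d+1})`, the cycle
matroid of the complete graph on `d + 1` vertices (expressed here via its standard
binary representation by the vectors `e_i + e_j`). -/
theorem stmt17 {α : Type} [Fintype α] [DecidableEq α] (M : Matroid α)
    (hsimple : mSimple M)
    (hbinary : ∃ (n : ℕ) (φ : α → (Fin n → ZMod 2)), ∀ I : Set α, I ⊆ M.E →
      (M.Indep I ↔ LinearIndependent (ZMod 2) (fun x : I => φ x)))
    (Y : Set α) (hmod : modularFlat M Y) (hcopoint : mrk M Y + 1 = mrk M M.E)
    (d : ℕ) (hd : mrk M (M.E \ Y) = d) :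
    ∃ f : {p : Fin (d + 1) × Fin (d + 1) // p.1 < p.2} → α,
      Function.Injective f ∧ (∀ e, f e ∈ M.E) ∧
      ∀ S : Set {p : Fin (d + 1) × Fin (d + 1) // p.1 < p.2},
        (M.Indep (f '' S) ↔
          LinearIndependent (ZMod 2) (fun s : S => edgeVec (d + 1) s.1.1)) :=
  stmt17_general M hsimple hbinary Y hmod hcopoint d hd
end
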